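/- Let A_1, ..., A_m be nonnegative n×n matrices and w_1, ..., w_m positive numbers, and let B be the entrywise max B = max_k w_k A_k, with max-times spectral radius μ > 0. Then min over positive x of max_k w_k (max_{i,j} a^{(k)}_{ij} x_j / x_i) equals μ, and the minimizers are exactly the vectors x = (μ^{-1}B)* u with u positive. -/

import Mathlib

open scoped BigOperators

noncomputable def mtMulMat {n : ℕ} (A B : Matrix (Fin n) (Fin n) ℝ) :
    Matrix (Fin n) (Fin n) ℝ :=
  fun i j => ⨆ k, A i k * B k j

noncomputable def mtMulVec {n : ℕ} (A : Matrix (Fin n) (Fin n) ℝ) (x : Fin n → ℝ) :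
    Fin n → ℝ :=
  fun i => ⨆ j, A i j * x j

noncomputable def mtPow {n : ℕ} (A : Matrix (Fin n) (Fin n) ℝ) : ℕ → Matrix (Fin n) (Fin n) ℝ
  | 0 => fun i j => if i = j then 1 else 0
  | m + 1 => mtMulMat (mtPow A m) A

noncomputable def mtTrace {n : ℕ} (A : Matrix (Fin n) (Fin n) ℝ) : ℝ := ⨆ i, A i i

noncomputable def mtTr {n : ℕ} (A : Matrix (Fin n) (Fin n) ℝ) : ℝ :=
  ⨆ m : Fin n, mtTrace (mtPow A (m.1 + 1))

noncomputable def kleeneStar {n : ℕ} (A : Matrix (Fin n) (Fin n) ℝ) :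
    Matrix (Fin n) (Fin n) ℝ :=
  fun i j => ⨆ m : Fin n, mtPow A m.1 i j

noncomputable def cycleMean {n : ℕ} (A : Matrix (Fin n) (Fin n) ℝ) (c : List (Fin n)) : ℝ :=
  (((c.zip (c.rotate 1)).map (fun p => A p.1 p.2)).prod) ^ ((1 : ℝ) / c.length)

noncomputable def specRad {n : ℕ} (A : Matrix (Fin n) (Fin n) ℝ) : ℝ :=
  sSup {r : ℝ | ∃ c : List (Fin n), c ≠ [] ∧ c.length ≤ n ∧ r = cycleMean A c}

/-!
Put `μ = specRad B` and `C = μ⁻¹ • B`. Exchanging maxima, the objective at `x` equals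
`max_{i,j} b_ij x_j / x_i`, and this is `≤ t` exactly when `b_ij x_j ≤ t x_i` for all `i, j`.
Multiplying these inequalities along a cycle, the `x`'s telescope, so every cycle mean, hence `μ`,
is at most the objective; and the objective equals `μ` iff `C x ≤ x`.

Every elementary cycle of `C` has weight `≤ 1`. Cutting elementary cycles out of walks shows that
every max-times power `C^k` is dominated by an elementary path, so `C^k ≤ C*` for all `k`. Hence
`C (C* u) ≤ C* u`, so `x = C* u` is a minimizer, and conversely `C x ≤ x` gives `C* x = x`.
-/

namespace MaxTimes

lemma iSup_comm_of_nonneg {ι κ : Type*} [Finite ι] [Finite κ] {f : ι → κ → ℝ}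
    (hf : ∀ i j, 0 ≤ f i j) : ⨆ i, ⨆ j, f i j = ⨆ j, ⨆ i, f i j := by
  have hl : 0 ≤ ⨆ i, ⨆ j, f i j := Real.iSup_nonneg fun i => Real.iSup_nonneg (hf i)
  have hr : 0 ≤ ⨆ j, ⨆ i, f i j := Real.iSup_nonneg fun j => Real.iSup_nonneg (hf · j)
  refine le_antisymm (Real.iSup_le (fun i => Real.iSup_le (fun j => ?_) hr) hr)
    (Real.iSup_le (fun j => Real.iSup_le (fun i => ?_) hl) hl)
  · exact le_ciSup_of_le (Finite.bddAbove_range _) j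
      (le_ciSup (Finite.bddAbove_range fun i => f i j) i)
  · exact le_ciSup_of_le (Finite.bddAbove_range _) i (le_ciSup (Finite.bddAbove_range (f i)) j)

variable {n : ℕ} {C : Matrix (Fin n) (Fin n) ℝ}

section Powers

lemma mtPow_zero_apply (i j : Fin n) : mtPow C 0 i j = if i = j then 1 else 0 := rfl

lemma mtPow_succ_apply (k : ℕ) (i j : Fin n) :
    mtPow C (k + 1) i j = ⨆ l, mtPow C k i l * C l j := rfl

lemma one_le_kleeneStar_self (i : Fin n) : 1 ≤ kleeneStar C i i :=
  le_ciSup_of_le (Finite.bddAbove_range _) ⟨0, i.pos⟩ (by simp [mtPow_zero_apply])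

lemma le_mtMulVec_kleeneStar {u : Fin n → ℝ} (hu : ∀ i, 0 ≤ u i) (i : Fin n) :
    u i ≤ mtMulVec (kleeneStar C) u i :=
  calc u i ≤ kleeneStar C i i * u i := le_mul_of_one_le_left (hu i) (one_le_kleeneStar_self i)
    _ ≤ mtMulVec (kleeneStar C) u i :=
      le_ciSup (Finite.bddAbove_range fun j => kleeneStar C i j * u j) i

variable (hC : ∀ i j, 0 ≤ C i j)
include hC

lemma mtPow_nonneg (k : ℕ) (i j : Fin n) : 0 ≤ mtPow C k i j := by
  induction k generalizing j with
  | zero => rw [mtPow_zero_apply]; split_ifs <;> norm_num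
  | succ k ih => exact Real.iSup_nonneg fun l => mul_nonneg (ih l) (hC l j)

lemma mtPow_one_apply (i j : Fin n) : mtPow C 1 i j = C i j := by
  rw [mtPow_succ_apply]
  refine le_antisymm (Real.iSup_le (fun l => ?_) (hC i j))
    (le_ciSup_of_le (Finite.bddAbove_range _) i (by simp [mtPow_zero_apply]))
  rw [mtPow_zero_apply]
  split_ifs with h <;> simp [h, hC i j]

lemma mtPow_succ_apply' (k : ℕ) (i j : Fin n) :
    mtPow C (k + 1) i j = ⨆ l, C i l * mtPow C k l j := by
  induction k generalizing j with
  | zero =>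
    rw [mtPow_one_apply hC]
    refine le_antisymm (le_ciSup_of_le (Finite.bddAbove_range _) j (by simp [mtPow_zero_apply]))
      (Real.iSup_le (fun l => ?_) (hC i j))
    rw [mtPow_zero_apply]
    split_ifs with h <;> simp [h, hC i j]
  | succ k ih =>
    rw [mtPow_succ_apply]
    simp only [ih, mtPow_succ_apply k, Real.iSup_mul_of_nonneg (hC _ j),
      Real.mul_iSup_of_nonneg (hC i _), mul_assoc]
    exact iSup_comm_of_nonneg fun l a =>
      mul_nonneg (hC i a) (mul_nonneg (mtPow_nonneg hC k a l) (hC l j))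

lemma kleeneStar_nonneg (i j : Fin n) : 0 ≤ kleeneStar C i j :=
  Real.iSup_nonneg fun m => mtPow_nonneg hC m i j

lemma mtPow_mul_le_of_mul_le {x : Fin n → ℝ} (hx : ∀ i, 0 ≤ x i)
    (hsub : ∀ i j, C i j * x j ≤ x i) (k : ℕ) (i j : Fin n) : mtPow C k i j * x j ≤ x i := by
  induction k generalizing j with
  | zero => rw [mtPow_zero_apply]; split_ifs with h <;> simp [h, hx]
  | succ k ih =>
    rw [mtPow_succ_apply, Real.iSup_mul_of_nonneg (hx j)]
    refine Real.iSup_le (fun l => ?_) (hx i)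
    calc mtPow C k i l * C l j * x j = mtPow C k i l * (C l j * x j) := mul_assoc _ _ _
      _ ≤ mtPow C k i l * x l := mul_le_mul_of_nonneg_left (hsub l j) (mtPow_nonneg hC k i l)
      _ ≤ x i := ih l

lemma mtMulVec_kleeneStar_eq_self {x : Fin n → ℝ} (hx : ∀ i, 0 ≤ x i)
    (hsub : ∀ i j, C i j * x j ≤ x i) : mtMulVec (kleeneStar C) x = x := by
  funext i
  refine le_antisymm (Real.iSup_le (fun j => ?_) (hx i)) (le_mtMulVec_kleeneStar hx i)
  rw [kleeneStar, Real.iSup_mul_of_nonneg (hx j)]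
  exact Real.iSup_le (fun m => mtPow_mul_le_of_mul_le hC hx hsub m i j) (hx i)

end Powers

def walkWeight (C : Matrix (Fin n) (Fin n) ℝ) (i : Fin n) (l : List (Fin n)) : ℝ :=
  (((i :: l).zip l).map fun e => C e.1 e.2).prod

section Walks

@[simp] lemma walkWeight_nil (i : Fin n) : walkWeight C i [] = 1 := by simp [walkWeight]

@[simp] lemma walkWeight_cons (i a : Fin n) (l : List (Fin n)) :
    walkWeight C i (a :: l) = C i a * walkWeight C a l := by simp [walkWeight]

lemma walkWeight_append_cons (i v : Fin n) (s t : List (Fin n)) :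
    walkWeight C i (s ++ v :: t) = walkWeight C i (s ++ [v]) * walkWeight C v t := by
  induction s generalizing i with
  | nil => simp
  | cons a s ih => simp [ih, mul_assoc]

lemma walkWeight_smul (r : ℝ) (i : Fin n) (l : List (Fin n)) :
    walkWeight (r • C) i l = r ^ l.length * walkWeight C i l := by
  induction l generalizing i with
  | nil => simp
  | cons a l ih => simp [ih]; ring

lemma walkWeight_nonneg (hC : ∀ i j, 0 ≤ C i j) (i : Fin n) (l : List (Fin n)) :
    0 ≤ walkWeight C i l := by
  induction l generalizing i with
  | nil => simp
  | cons a l ih => simpa using mul_nonneg (hC i a) (ih a)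

lemma walkWeight_le_mtPow (hC : ∀ i j, 0 ≤ C i j) {i j : Fin n} {l : List (Fin n)}
    (hj : (i :: l).getLast? = some j) : walkWeight C i l ≤ mtPow C l.length i j := by
  induction l generalizing i with
  | nil => cases hj; simp [mtPow_zero_apply]
  | cons a l ih =>
    rw [List.getLast?_cons_cons] at hj
    rw [walkWeight_cons, List.length_cons, mtPow_succ_apply' hC]
    exact le_ciSup_of_le (Finite.bddAbove_range _) a
      (mul_le_mul_of_nonneg_left (ih hj) (hC i a))

lemma walkWeight_mul_le (hC : ∀ i j, 0 ≤ C i j) {x : Fin n → ℝ} {t : ℝ} (ht : 0 ≤ t)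
    (hx : ∀ a b, C a b * x b ≤ t * x a) {i j : Fin n} {l : List (Fin n)}
    (hj : (i :: l).getLast? = some j) : walkWeight C i l * x j ≤ t ^ l.length * x i := by
  induction l generalizing i with
  | nil => cases hj; simp
  | cons a l ih =>
    rw [List.getLast?_cons_cons] at hj
    calc walkWeight C i (a :: l) * x j = C i a * (walkWeight C a l * x j) := by simp [mul_assoc]
      _ ≤ C i a * (t ^ l.length * x a) := mul_le_mul_of_nonneg_left (ih hj) (hC i a)
      _ = t ^ l.length * (C i a * x a) := by ring
      _ ≤ t ^ l.length * (t * x i) := mul_le_mul_of_nonneg_left (hx i a) (pow_nonneg ht _)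
      _ = t ^ (a :: l).length * x i := by rw [List.length_cons, pow_succ]; ring

end Walks

section Kleene

variable (hC : ∀ i j, 0 ≤ C i j)
  (hcyc : ∀ (i : Fin n) (l : List (Fin n)), (i :: l).Nodup → walkWeight C i (l ++ [i]) ≤ 1)
include hC hcyc

lemma exists_nodup_walk_mul_le {a j : Fin n} {l : List (Fin n)} (hl : (a :: l).Nodup)
    (hj : (a :: l).getLast? = some j) (i : Fin n) :
    ∃ l', (i :: l').Nodup ∧ (i :: l').getLast? = some j ∧
      C i a * walkWeight C a l ≤ walkWeight C i l' := by
  by_cases hi : i ∈ a :: l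
  · obtain ⟨s, t, hst⟩ := List.append_of_mem hi
    rw [hst] at hl hj
    have hmid := List.nodup_middle.1 hl
    refine ⟨t, hl.sublist (List.sublist_append_right s _),
      by rwa [List.getLast?_append_cons] at hj, ?_⟩
    have hcycle : walkWeight C i (s ++ [i]) ≤ 1 :=
      hcyc i s (hmid.sublist ((List.sublist_append_left s t).cons_cons i))
    -- `i` already lies on the path: cut off the elementary cycle `i :: s` it closes.
    calc C i a * walkWeight C a l = walkWeight C i (s ++ [i]) * walkWeight C i t := by
          rw [← walkWeight_cons, hst, walkWeight_append_cons]
      _ ≤ walkWeight C i t :=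
          mul_le_of_le_one_left (walkWeight_nonneg hC i t) hcycle
  · exact ⟨a :: l, List.nodup_cons.2 ⟨hi, hl⟩, by rwa [List.getLast?_cons_cons],
      (walkWeight_cons i a l).ge⟩

lemma exists_nodup_walk_mtPow_le (k : ℕ) (i j : Fin n) :
    ∃ l, (i :: l).Nodup ∧ (i :: l).getLast? = some j ∧ mtPow C k i j ≤ walkWeight C i l := by
  induction k generalizing i with
  | zero =>
    by_cases h : i = j
    · subst h
      exact ⟨[], by simp, rfl, by simp [mtPow_zero_apply]⟩
    · exact ⟨[j], by simp [h], rfl, by simp [mtPow_zero_apply, h, hC i j]⟩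
  | succ k ih =>
    have : Nonempty (Fin n) := ⟨i⟩
    obtain ⟨a, ha⟩ := exists_eq_ciSup_of_finite (f := fun a => C i a * mtPow C k a j)
    obtain ⟨l, hl, hj, hle⟩ := ih a
    obtain ⟨l', hl', hj', hle'⟩ := exists_nodup_walk_mul_le hC hcyc hl hj i
    refine ⟨l', hl', hj', ?_⟩
    rw [mtPow_succ_apply' hC, ← ha]
    exact (mul_le_mul_of_nonneg_left hle (hC i a)).trans hle'

lemma mtPow_le_kleeneStar (k : ℕ) (i j : Fin n) : mtPow C k i j ≤ kleeneStar C i j := by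
  obtain ⟨l, hl, hj, hle⟩ := exists_nodup_walk_mtPow_le hC hcyc k i j
  have hlen : l.length < n := by simpa using hl.length_le_card
  exact hle.trans ((walkWeight_le_mtPow hC hj).trans
    (le_ciSup (Finite.bddAbove_range fun m : Fin n => mtPow C m i j) ⟨l.length, hlen⟩))

lemma mul_kleeneStar_le (i j l : Fin n) : C i j * kleeneStar C j l ≤ kleeneStar C i l := by
  rw [kleeneStar, Real.mul_iSup_of_nonneg (hC i j)]
  refine Real.iSup_le (fun m => ?_) (kleeneStar_nonneg hC i l)
  calc C i j * mtPow C m j l ≤ mtPow C (m + 1) i l := by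
        rw [mtPow_succ_apply' hC]
        exact le_ciSup (Finite.bddAbove_range fun a => C i a * mtPow C m a l) j
    _ ≤ kleeneStar C i l := mtPow_le_kleeneStar hC hcyc _ i l

lemma mul_mtMulVec_kleeneStar_le {u : Fin n → ℝ} (hu : ∀ i, 0 ≤ u i) (i j : Fin n) :
    C i j * mtMulVec (kleeneStar C) u j ≤ mtMulVec (kleeneStar C) u i := by
  rw [mtMulVec, Real.mul_iSup_of_nonneg (hC i j)]
  refine Real.iSup_le (fun l => ?_) ((hu i).trans (le_mtMulVec_kleeneStar hu i))
  calc C i j * (kleeneStar C j l * u l) ≤ kleeneStar C i l * u l := by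
        rw [← mul_assoc]
        exact mul_le_mul_of_nonneg_right (mul_kleeneStar_le hC hcyc i j l) (hu l)
    _ ≤ mtMulVec (kleeneStar C) u i :=
      le_ciSup (Finite.bddAbove_range fun a => kleeneStar C i a * u a) l

end Kleene

section SpectralRadius

lemma cycleProd_eq_walkWeight (i : Fin n) (l : List (Fin n)) :
    (((i :: l).zip ((i :: l).rotate 1)).map fun p => C p.1 p.2).prod =
      walkWeight C i (l ++ [i]) := by
  have hzip := List.zip_append (l₁ := i :: l) (l₂ := l ++ [i]) (r₁ := [i]) (r₂ := []) (by simp)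
  simp only [List.append_nil, List.zip_nil_right] at hzip
  rw [List.rotate_cons_succ, List.rotate_zero, walkWeight, ← List.cons_append, hzip]

lemma cycleMean_le_iff (hC : ∀ i j, 0 ≤ C i j) {t : ℝ} (ht : 0 ≤ t) (i : Fin n)
    (l : List (Fin n)) :
    cycleMean C (i :: l) ≤ t ↔ walkWeight C i (l ++ [i]) ≤ t ^ (l.length + 1) := by
  have hlen : (0 : ℝ) < (i :: l).length := by rw [List.length_cons]; positivity
  rw [cycleMean, cycleProd_eq_walkWeight, one_div,
    Real.rpow_inv_le_iff_of_pos (walkWeight_nonneg hC _ _) ht hlen]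
  norm_cast

lemma cycleMean_le_of_mul_le (hC : ∀ i j, 0 ≤ C i j) {x : Fin n → ℝ} (hx : ∀ i, 0 < x i)
    {t : ℝ} (ht : 0 ≤ t) (hsub : ∀ i j, C i j * x j ≤ t * x i) {c : List (Fin n)}
    (hc : c ≠ []) : cycleMean C c ≤ t := by
  obtain ⟨i, l, rfl⟩ := List.exists_cons_of_ne_nil hc
  rw [cycleMean_le_iff hC ht]
  have h := walkWeight_mul_le hC ht hsub (i := i) (j := i) (l := l ++ [i])
    (by rw [← List.cons_append, List.getLast?_concat])
  simpa using le_of_mul_le_mul_right h (hx i)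

lemma specRad_le_of_mul_le (hC : ∀ i j, 0 ≤ C i j) {x : Fin n → ℝ} (hx : ∀ i, 0 < x i)
    {t : ℝ} (ht : 0 ≤ t) (hsub : ∀ i j, C i j * x j ≤ t * x i) : specRad C ≤ t :=
  Real.sSup_le (by rintro _ ⟨c, hc, -, rfl⟩; exact cycleMean_le_of_mul_le hC hx ht hsub hc) ht

lemma bddAbove_cycleMeans (C : Matrix (Fin n) (Fin n) ℝ) :
    BddAbove {r : ℝ | ∃ c : List (Fin n), c ≠ [] ∧ c.length ≤ n ∧ r = cycleMean C c} :=
  ((List.finite_length_le (Fin n) n).image (cycleMean C)).bddAbove.mono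
    (by rintro _ ⟨c, -, hc, rfl⟩; exact ⟨c, hc, rfl⟩)

lemma walkWeight_inv_specRad_smul_le_one (hC : ∀ i j, 0 ≤ C i j) (hμ : 0 < specRad C)
    {i : Fin n} {l : List (Fin n)} (hl : (i :: l).Nodup) :
    walkWeight ((specRad C)⁻¹ • C) i (l ++ [i]) ≤ 1 := by
  have hmean : cycleMean C (i :: l) ≤ specRad C :=
    le_csSup (bddAbove_cycleMeans C)
      ⟨i :: l, List.cons_ne_nil i l, by simpa using hl.length_le_card, rfl⟩
  rw [cycleMean_le_iff hC hμ.le] at hmean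
  rw [walkWeight_smul, List.length_append, List.length_singleton, inv_pow]
  exact inv_mul_le_one_of_le₀ hmean (by positivity)

end SpectralRadius

section MaxRatio

lemma iSup_iSup_mul_div_le_iff {x : Fin n → ℝ} (hx : ∀ i, 0 < x i) {t : ℝ} (ht : 0 ≤ t) :
    ⨆ i, ⨆ j, C i j * x j / x i ≤ t ↔ ∀ i j, C i j * x j ≤ t * x i := by
  refine ⟨fun h i j => ?_, fun h => Real.iSup_le (fun i => Real.iSup_le
    (fun j => (div_le_iff₀ (hx i)).2 (h i j)) ht) ht⟩
  rw [← div_le_iff₀ (hx i)]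
  exact (le_ciSup (Finite.bddAbove_range fun j => C i j * x j / x i) j).trans
    ((le_ciSup (Finite.bddAbove_range _) i).trans h)

variable (hC : ∀ i j, 0 ≤ C i j) {x : Fin n → ℝ} (hx : ∀ i, 0 < x i)
include hC hx

lemma specRad_le_iSup_iSup_mul_div : specRad C ≤ ⨆ i, ⨆ j, C i j * x j / x i := by
  have ht : 0 ≤ ⨆ i, ⨆ j, C i j * x j / x i := Real.iSup_nonneg fun i =>
    Real.iSup_nonneg fun j => div_nonneg (mul_nonneg (hC i j) (hx j).le) (hx i).le
  exact specRad_le_of_mul_le hC hx ht ((iSup_iSup_mul_div_le_iff hx ht).1 le_rfl)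

lemma iSup_iSup_mul_div_eq_specRad_iff (hμ : 0 < specRad C) :
    ⨆ i, ⨆ j, C i j * x j / x i = specRad C ↔
      ∀ i j, ((specRad C)⁻¹ • C) i j * x j ≤ x i := by
  have hscale : ∀ i j,
      ((specRad C)⁻¹ • C) i j * x j ≤ x i ↔ C i j * x j ≤ specRad C * x i := fun i j => by
    rw [Matrix.smul_apply, smul_eq_mul, mul_assoc, inv_mul_le_iff₀ hμ]
  simp only [hscale, ← iSup_iSup_mul_div_le_iff hx hμ.le]
  exact ⟨le_of_eq, fun h => le_antisymm h (specRad_le_iSup_iSup_mul_div hC hx)⟩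

end MaxRatio

lemma iSup_mul_iSup_iSup_mul_div_eq {κ : Type*} [Finite κ] {A : κ → Matrix (Fin n) (Fin n) ℝ}
    (hA : ∀ k i j, 0 ≤ A k i j) {w : κ → ℝ} (hw : ∀ k, 0 ≤ w k) {B : Matrix (Fin n) (Fin n) ℝ}
    (hB : B = fun i j => ⨆ k, w k * A k i j) {x : Fin n → ℝ} (hx : ∀ i, 0 < x i) :
    ⨆ k, w k * ⨆ i, ⨆ j, A k i j * x j / x i = ⨆ i, ⨆ j, B i j * x j / x i := by
  subst hB
  have hr : ∀ i j, 0 ≤ x j / x i := fun i j => div_nonneg (hx j).le (hx i).le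
  have hg : ∀ k i j, 0 ≤ w k * (A k i j * (x j / x i)) := fun k i j =>
    mul_nonneg (hw k) (mul_nonneg (hA k i j) (hr i j))
  simp only [mul_div_assoc, Real.mul_iSup_of_nonneg (hw _), Real.iSup_mul_of_nonneg (hr _ _),
    mul_assoc]
  rw [iSup_comm_of_nonneg fun k i => Real.iSup_nonneg (hg k i)]
  exact iSup_congr fun i => iSup_comm_of_nonneg (hg · i)

end MaxTimes

open MaxTimes

theorem stmt9_general {n m : ℕ}
    (A : Fin m → Matrix (Fin n) (Fin n) ℝ) (hA : ∀ k i j, 0 ≤ A k i j)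
    (w : Fin m → ℝ) (hw : ∀ k, 0 < w k)
    (B : Matrix (Fin n) (Fin n) ℝ) (hB : B = fun i j => ⨆ k, w k * A k i j)
    (hmu : 0 < specRad B) :
    IsLeast {v : ℝ | ∃ x : Fin n → ℝ, (∀ i, 0 < x i) ∧
        v = ⨆ k, w k * ⨆ i, ⨆ j, A k i j * x j / x i} (specRad B) ∧
      ∀ x : Fin n → ℝ, (∀ i, 0 < x i) →
        ((⨆ k, w k * ⨆ i, ⨆ j, A k i j * x j / x i) = specRad B ↔
          ∃ u : Fin n → ℝ, (∀ i, 0 < u i) ∧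
            x = mtMulVec (kleeneStar ((specRad B)⁻¹ • B)) u) := by
  have hB₀ : ∀ i j, 0 ≤ B i j := fun i j =>
    hB ▸ Real.iSup_nonneg fun k => mul_nonneg (hw k).le (hA k i j)
  have hC : ∀ i j, 0 ≤ ((specRad B)⁻¹ • B) i j := fun i j =>
    mul_nonneg (inv_nonneg.2 hmu.le) (hB₀ i j)
  have hcyc : ∀ i l, (i :: l).Nodup → walkWeight ((specRad B)⁻¹ • B) i (l ++ [i]) ≤ 1 :=
    fun _ _ => walkWeight_inv_specRad_smul_le_one hB₀ hmu
  have hobj : ∀ x : Fin n → ℝ, (∀ i, 0 < x i) →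
      ((⨆ k, w k * ⨆ i, ⨆ j, A k i j * x j / x i) = specRad B ↔
        ∀ i j, ((specRad B)⁻¹ • B) i j * x j ≤ x i) := fun x hx => by
    rw [iSup_mul_iSup_iSup_mul_div_eq hA (fun k => (hw k).le) hB hx]
    exact iSup_iSup_mul_div_eq_specRad_iff hB₀ hx hmu
  have hKpos : ∀ u : Fin n → ℝ, (∀ i, 0 < u i) →
      ∀ i, 0 < mtMulVec (kleeneStar ((specRad B)⁻¹ • B)) u i := fun u hu i =>
    (hu i).trans_le (le_mtMulVec_kleeneStar (fun j => (hu j).le) i)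
  have hKsub := fun (u : Fin n → ℝ) (hu : ∀ i, 0 < u i) =>
    mul_mtMulVec_kleeneStar_le hC hcyc fun j => (hu j).le
  have hone : ∀ i : Fin n, (0 : ℝ) < 1 := fun _ => one_pos
  refine ⟨⟨⟨_, hKpos 1 hone, ((hobj _ (hKpos 1 hone)).2 (hKsub 1 hone)).symm⟩, ?_⟩,
    fun x hx => (hobj x hx).trans ⟨fun h => ?_, ?_⟩⟩
  · rintro _ ⟨x, hx, rfl⟩
    rw [iSup_mul_iSup_iSup_mul_div_eq hA (fun k => (hw k).le) hB hx]
    exact specRad_le_iSup_iSup_mul_div hB₀ hx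
  · exact ⟨x, hx, (mtMulVec_kleeneStar_eq_self hC (fun i => (hx i).le) h).symm⟩
  · rintro ⟨u, hu, rfl⟩
    exact hKsub u hu

theorem stmt9 {n m : ℕ} (hn : 0 < n) (hm : 0 < m)
    (A : Fin m → Matrix (Fin n) (Fin n) ℝ) (hA : ∀ k i j, 0 ≤ A k i j)
    (w : Fin m → ℝ) (hw : ∀ k, 0 < w k)
    (B : Matrix (Fin n) (Fin n) ℝ) (hB : B = fun i j => ⨆ k, w k * A k i j)
    (hmu : 0 < specRad B) :
    IsLeast {v : ℝ | ∃ x : Fin n → ℝ, (∀ i, 0 < x i) ∧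
        v = ⨆ k, w k * ⨆ i, ⨆ j, A k i j * x j / x i} (specRad B) ∧
      ∀ x : Fin n → ℝ, (∀ i, 0 < x i) →
        ((⨆ k, w k * ⨆ i, ⨆ j, A k i j * x j / x i) = specRad B ↔
          ∃ u : Fin n → ℝ, (∀ i, 0 < u i) ∧
            x = mtMulVec (kleeneStar ((specRad B)⁻¹ • B)) u) :=
  stmt9_general A hA w hw B hB hmu
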